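/- Let G ≤ S_n be a permutation group acting naturally on V = k^n. Then the lead term ideal of the Hilbert ideal I(G,V), with respect to the lexicographic order on k[x_1,…,x_n] with x_1 > x_2 > … > x_n, contains the monomial ideal (x_1, x_2^2, x_3^3, …, x_n^n); in particular x_i^i ∈ Lead(I(G,V)) for all 1 ≤ i ≤ n. -/

import Mathlib

/-!
The complete homogeneous polynomials `h_d(x₁, …, xₙ)`, `d ≥ 1`, are symmetric without constant
term, hence lie in the Hilbert ideal `I(G,V)` for every `G ≤ Sₙ`. The recursion
`h_d(xᵢ₊₁, …, xₙ) = h_d(xᵢ, …, xₙ) - xᵢ h_{d-1}(xᵢ, …, xₙ)` then gives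
`h_d(xᵢ, …, xₙ) ∈ I(G,V)` for `d ≥ i` by induction on `i`, and the lex-leading monomial of
`h_i(xᵢ, …, xₙ)` is `xᵢ^i`.
-/

open MvPolynomial

/-- The leading monomial (exponent vector) of a polynomial with respect to the lexicographic
order where variables with smaller index in `σ` are larger (junk value `0` for `f = 0`). -/
noncomputable def leadM {k : Type*} [CommSemiring k] {σ : Type*}
    [LinearOrder σ] (f : MvPolynomial σ k) : Lex (σ →₀ ℕ) :=
  letI : DecidableEq (Lex (σ →₀ ℕ)) := Classical.decEq _
  ((f.support.image (toLex : (σ →₀ ℕ) → Lex (σ →₀ ℕ))).max).unbotD (toLex 0)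

/-- The lead term ideal of an ideal `I`: the ideal generated by the leading monomials of
all nonzero elements of `I`. -/
noncomputable def leadIdeal {k : Type*} [CommSemiring k] {σ : Type*} [LinearOrder σ]
    (I : Ideal (MvPolynomial σ k)) : Ideal (MvPolynomial σ k) :=
  Ideal.span {p | ∃ f ∈ I, f ≠ 0 ∧ p = monomial (ofLex (leadM f)) (1 : k)}

theorem leadM_eq_of_forall_le {σ R : Type*} [CommSemiring R] [LinearOrder σ]
    {f : MvPolynomial σ R} {a : σ →₀ ℕ} (ha : a ∈ f.support)
    (hle : ∀ b ∈ f.support, toLex b ≤ toLex a) : leadM f = toLex a := by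
  -- for every instance, since `leadM` uses `Classical.decEq`
  have hmax : ∀ [DecidableEq (Lex (σ →₀ ℕ))], (f.support.image toLex).max =
      ((toLex a : Lex (σ →₀ ℕ)) : WithBot (Lex (σ →₀ ℕ))) :=
    le_antisymm (Finset.max_le fun _ hc => by
        obtain ⟨b, hb, rfl⟩ := Finset.mem_image.mp hc
        exact WithBot.coe_le_coe.mpr (hle b hb))
      (Finset.le_max (Finset.mem_image_of_mem _ ha))
  simp only [leadM, hmax, WithBot.unbotD_coe]

theorem monomial_leadM_mem_leadIdeal {σ R : Type*} [CommSemiring R] [LinearOrder σ]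
    {I : Ideal (MvPolynomial σ R)} {f : MvPolynomial σ R} (hf : f ∈ I) (hf₀ : f ≠ 0) :
    monomial (ofLex (leadM f)) 1 ∈ leadIdeal I :=
  Ideal.subset_span ⟨f, hf, hf₀, rfl⟩

theorem Finsupp.toLex_le_toLex_single_degree {σ : Type*} [LinearOrder σ] {b : σ →₀ ℕ} {i : σ}
    (hb : ∀ j < i, b j = 0) : toLex b ≤ toLex (Finsupp.single i b.degree) := by
  have hsplit : b.degree = b i + (b.erase i).degree := by
    conv_lhs => rw [← Finsupp.single_add_erase i b]
    rw [map_add, Finsupp.degree_single]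
  rcases Nat.eq_zero_or_pos (b.erase i).degree with hrest | hrest
  · rw [Finsupp.degree_eq_zero_iff] at hrest
    have hb_eq : b = Finsupp.single i b.degree := by
      conv_lhs => rw [← Finsupp.single_add_erase i b, hrest, add_zero]
      rw [hsplit, hrest, map_zero, add_zero]
    exact (congrArg toLex hb_eq).le
  · refine le_of_lt (Finsupp.Lex.lt_iff.mpr ⟨i, fun j hj => ?_, ?_⟩)
    · simp [hb j hj, hj.ne']
    · simp only [ofLex_toLex, Finsupp.single_eq_same]
      omega

namespace MvPolynomial

variable {σ : Type*} [DecidableEq σ]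

section CompleteHomogeneous

variable {R : Type*} [CommSemiring R]

/-- `h_d(X i : i ∈ s)`, the sum of all monomials of degree `d` in the variables indexed by `s`;
for `s = univ` it is `MvPolynomial.hsymm σ R d`. -/
noncomputable def completeHomogeneous (s : Finset σ) (d : ℕ) : MvPolynomial σ R :=
  ∑ a ∈ s.finsuppAntidiag d, monomial a 1

theorem coeff_completeHomogeneous (s : Finset σ) (d : ℕ) (a : σ →₀ ℕ) :
    coeff a (completeHomogeneous s d : MvPolynomial σ R) =
      if a.degree = d ∧ a.support ⊆ s then 1 else 0 := by
  simp only [completeHomogeneous, coeff_sum, coeff_monomial, Finset.sum_ite_eq',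
    Finset.mem_finsuppAntidiag']
  rfl

theorem constantCoeff_completeHomogeneous (s : Finset σ) {d : ℕ} (hd : d ≠ 0) :
    constantCoeff (completeHomogeneous s d : MvPolynomial σ R) = 0 := by
  rw [constantCoeff_eq, coeff_completeHomogeneous, if_neg]
  simpa using hd.symm

theorem coeff_single_completeHomogeneous {s : Finset σ} {i : σ} (hi : i ∈ s) (d : ℕ) :
    coeff (Finsupp.single i d) (completeHomogeneous s d : MvPolynomial σ R) = 1 := by
  rw [coeff_completeHomogeneous, if_pos]
  exact ⟨Finsupp.degree_single i d,
    Finsupp.support_single_subset.trans (Finset.singleton_subset_iff.mpr hi)⟩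

theorem completeHomogeneous_univ_isSymmetric [Fintype σ] (d : ℕ) :
    (completeHomogeneous Finset.univ d : MvPolynomial σ R).IsSymmetric := by
  intro e
  ext b
  obtain ⟨a, rfl⟩ := Finsupp.mapDomain_surjective e.surjective b
  simp only [coeff_rename_mapDomain _ e.injective, coeff_completeHomogeneous,
    Finsupp.degree_mapDomain, Finset.subset_univ]

theorem completeHomogeneous_insert {a : σ} {s : Finset σ} (ha : a ∉ s) (d : ℕ) :
    (completeHomogeneous (insert a s) (d + 1) : MvPolynomial σ R) =
      X a * completeHomogeneous (insert a s) d + completeHomogeneous s (d + 1) := by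
  ext b
  simp only [coeff_add, coeff_X_mul', coeff_completeHomogeneous]
  by_cases hb : a ∈ b.support
  · obtain ⟨c, rfl⟩ := exists_add_of_le (Finsupp.single_le_iff.mpr
      (Nat.one_le_iff_ne_zero.mpr (Finsupp.mem_support_iff.mp hb)))
    have hdeg : (Finsupp.single a 1 + c).degree = c.degree + 1 := by simp [add_comm]
    have hsupp : (Finsupp.single a 1 + c).support ⊆ insert a s ↔ c.support ⊆ insert a s := by
      rw [Finsupp.support_add_eq_union, Finset.union_subset_iff]
      simp
    have hnot : ¬ (Finsupp.single a 1 + c).support ⊆ s := fun h => ha (h hb)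
    simp only [if_pos hb, add_tsub_cancel_left, hdeg, hsupp, Nat.add_right_cancel_iff, hnot,
      and_false, if_false, add_zero]
  · simp only [Finset.subset_insert_iff_of_notMem hb, if_neg hb, zero_add]

theorem completeHomogeneous_ne_zero [Nontrivial R] {s : Finset σ} (hs : s.Nonempty) (d : ℕ) :
    (completeHomogeneous s d : MvPolynomial σ R) ≠ 0 := fun h => by
  obtain ⟨i, hi⟩ := hs
  simpa [h] using coeff_single_completeHomogeneous (R := R) hi d

theorem leadM_completeHomogeneous [Nontrivial R] [LinearOrder σ] {s : Finset σ} {i : σ}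
    (hi : i ∈ s) (hs : ∀ j ∈ s, i ≤ j) (d : ℕ) :
    leadM (completeHomogeneous s d : MvPolynomial σ R) = toLex (Finsupp.single i d) := by
  refine leadM_eq_of_forall_le (by simp [coeff_single_completeHomogeneous hi]) fun b hb => ?_
  rw [mem_support_iff, coeff_completeHomogeneous, ne_eq, ite_eq_right_iff, not_forall] at hb
  obtain ⟨⟨rfl, hsupp⟩, -⟩ := hb
  refine Finsupp.toLex_le_toLex_single_degree fun j hj => ?_
  by_contra hbj
  exact (hs j (hsupp (Finsupp.mem_support_iff.mpr hbj))).not_gt hj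

end CompleteHomogeneous

theorem completeHomogeneous_Ici_mem {R : Type*} [CommRing R] {n : ℕ}
    {I : Ideal (MvPolynomial (Fin n) R)} (hI : ∀ d ≠ 0, completeHomogeneous Finset.univ d ∈ I)
    (i : Fin n) {d : ℕ} (hd : (i : ℕ) < d) : completeHomogeneous (Finset.Ici i) d ∈ I := by
  obtain ⟨m, hm⟩ := i
  change m < d at hd
  induction m generalizing d with
  | zero =>
    have huniv : Finset.Ici (⟨0, hm⟩ : Fin n) = Finset.univ := by
      ext j
      simp [Fin.le_def]
    exact huniv ▸ hI d (Nat.pos_iff_ne_zero.mp hd)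
  | succ m ih =>
    obtain ⟨d, rfl⟩ : ∃ d', d = d' + 1 := ⟨d - 1, by omega⟩
    let i : Fin n := ⟨m, by omega⟩
    have hIci : Finset.Ici (⟨m + 1, hm⟩ : Fin n) = Finset.Ioi i := by
      ext j
      simp only [i, Finset.mem_Ici, Finset.mem_Ioi, Fin.le_def, Fin.lt_def]
      omega
    have hrec := completeHomogeneous_insert (R := R) (Finset.notMem_Ioi_self (b := i)) d
    rw [Finset.Ioi_insert] at hrec
    rw [hIci, ← Ideal.add_mem_iff_right I (I.mul_mem_left (X i) (ih (d := d) i.isLt (by omega))),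
      ← hrec]
    exact ih i.isLt (by omega)

end MvPolynomial

/-- for a permutation group `G ≤ Sₙ` acting naturally on `V = kⁿ`, the lead
term ideal of the Hilbert ideal `I(G,V)` with respect to the lex order with
`x₁ > x₂ > ⋯ > xₙ` contains the monomial ideal `(x₁, x₂², …, xₙⁿ)`; in particular
`x_i^i ∈ Lead(I(G,V))` for all `i` (here `i : Fin n` encodes the `1`-based index `i+1`). -/
theorem powers_le_leadIdeal_hilbert (k : Type) [Field k] (n : ℕ)
    (G : Subgroup (Equiv.Perm (Fin n))) :
    Ideal.span {p : MvPolynomial (Fin n) k |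
        ∃ i : Fin n, p = monomial (Finsupp.single i ((i : ℕ) + 1)) (1 : k)} ≤
      leadIdeal (Ideal.span {h : MvPolynomial (Fin n) k |
        (∀ g ∈ G, rename (fun i => g⁻¹ i) h = h) ∧ constantCoeff h = 0}) := by
  rw [Ideal.span_le]
  rintro _ ⟨i, rfl⟩
  have hgen : ∀ d ≠ 0, completeHomogeneous Finset.univ d ∈ Ideal.span {h : MvPolynomial (Fin n) k |
      (∀ g ∈ G, rename (fun i => g⁻¹ i) h = h) ∧ constantCoeff h = 0} :=
    fun d hd => Ideal.subset_span ⟨fun g _ => completeHomogeneous_univ_isSymmetric d g⁻¹,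
      constantCoeff_completeHomogeneous _ hd⟩
  have hlead := monomial_leadM_mem_leadIdeal (completeHomogeneous_Ici_mem hgen i i.val.lt_succ_self)
    (completeHomogeneous_ne_zero Finset.nonempty_Ici _)
  rwa [leadM_completeHomogeneous (Finset.mem_Ici.mpr le_rfl) fun _ => Finset.mem_Ici.mp,
    ofLex_toLex] at hlead
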